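/- Fix ε ≥ 0. Under Assumptions 1 and 2, for every measurable feasible f̂ : 𝒳 → ℝ, the excess ambiguity is controlled by the excess R̄-risk: R(f̂, ε) − R(f*, ε) ≤ (1/c)·(R̄(f̂, ε) − R̄(f*, ε)). -/

import Mathlib

/-!
The margin `ε` cuts the real line into three cells: predict `-1`, abstain, predict `1`.
Take Lagrange multipliers `A = κ / t₁` and `B = κ / (1 - tₘ)` for the two coverage constraints,
with `κ = 1/2 - c`, and charge `A η`, `κ`, `B (1 - η)` on the three cells. The thresholds are
exactly where these costs cross, so `f*` minimises this loss pointwise, hence minimises its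
integral, the Lagrangian. Assumption 2 makes `A, B ≥ 1`, `f*` saturates both constraints and `f`
satisfies them, so dropping the multiplier terms leaves `R̄(f*) - c R(f*) ≤ R̄(f) - c R(f)`.
-/

open MeasureTheory ProbabilityTheory
open scoped ENNReal

lemma Real.measurable_sign : Measurable Real.sign :=
  Measurable.ite (measurableSet_lt measurable_id measurable_const) measurable_const <|
    Measurable.ite (measurableSet_lt measurable_const measurable_id) measurable_const
      measurable_const

lemma Real.abs_mul_sign_le {ε : ℝ} (hε : 0 ≤ ε) (r : ℝ) : |ε * Real.sign r| ≤ ε := by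
  rcases Real.sign_apply_eq r with h | h | h <;> simp [h, abs_of_nonneg hε, hε]

noncomputable def abstainLoss (ε lo mid hi v : ℝ) : ℝ :=
  if v < -ε then lo else if ε < v then hi else mid

lemma min_le_abstainLoss (ε lo mid hi v : ℝ) :
    min lo (min mid hi) ≤ abstainLoss ε lo mid hi v := by
  unfold abstainLoss
  split_ifs <;> simp

lemma abstainLoss_eq_indicator {𝒳 : Type*} {ε : ℝ} (hε : 0 ≤ ε) (κ : ℝ) (lo hi g : 𝒳 → ℝ) :
    (fun x => abstainLoss ε (lo x) κ (hi x) (g x)) =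
      {x | g x < -ε}.indicator lo + {x | ε < g x}.indicator hi
        + {x | |g x| ≤ ε}.indicator (fun _ => κ) := by
  ext x
  simp only [abstainLoss, Pi.add_apply, Set.indicator_apply, Set.mem_ofPred_eq, abs_le]
  split_ifs <;> grind

section AbstainLoss

variable {𝒳 : Type*} [MeasurableSpace 𝒳] {μ : Measure 𝒳} [IsFiniteMeasure μ] {ε : ℝ}
  {lo hi g : 𝒳 → ℝ}

lemma integrable_abstainLoss (hε : 0 ≤ ε) (κ : ℝ) (hlo : Integrable lo μ)
    (hhi : Integrable hi μ) (hg : Measurable g) :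
    Integrable (fun x => abstainLoss ε (lo x) κ (hi x) (g x)) μ := by
  rw [abstainLoss_eq_indicator hε]
  exact ((hlo.indicator (measurableSet_lt hg measurable_const)).add
    (hhi.indicator (measurableSet_lt measurable_const hg))).add
    ((integrable_const κ).indicator (measurableSet_le hg.abs measurable_const))

lemma integral_abstainLoss (hε : 0 ≤ ε) (κ : ℝ) (hlo : Integrable lo μ)
    (hhi : Integrable hi μ) (hg : Measurable g) :
    ∫ x, abstainLoss ε (lo x) κ (hi x) (g x) ∂μ =
      ∫ x in {x | g x < -ε}, lo x ∂μ + ∫ x in {x | ε < g x}, hi x ∂μ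
        + κ * μ.real {x | |g x| ≤ ε} := by
  have hB : MeasurableSet {x | g x < -ε} := measurableSet_lt hg measurable_const
  have hC : MeasurableSet {x | ε < g x} := measurableSet_lt measurable_const hg
  have hM : MeasurableSet {x | |g x| ≤ ε} := measurableSet_le hg.abs measurable_const
  rw [abstainLoss_eq_indicator hε,
    integral_add' ((hlo.indicator hB).add (hhi.indicator hC)) ((integrable_const κ).indicator hM),
    integral_add' (hlo.indicator hB) (hhi.indicator hC),
    integral_indicator hB, integral_indicator hC, integral_indicator hM, setIntegral_const,
    smul_eq_mul, mul_comm]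

end AbstainLoss

noncomputable def bayesAbstain (t1 tm ε p : ℝ) : ℝ :=
  if tm < p then 1 + ε else if t1 ≤ p then ε * Real.sign (p - 1 / 2) else -(1 + ε)

section BayesAbstain

variable {t1 tm ε : ℝ}

lemma bayesAbstain_lt_neg_iff (hε : 0 ≤ ε) (htt : t1 ≤ tm) (p : ℝ) :
    bayesAbstain t1 tm ε p < -ε ↔ p < t1 := by
  have := abs_le.1 (Real.abs_mul_sign_le hε (p - 1 / 2))
  unfold bayesAbstain
  split_ifs <;> constructor <;> intro h <;> linarith

lemma lt_bayesAbstain_iff (hε : 0 ≤ ε) (p : ℝ) : ε < bayesAbstain t1 tm ε p ↔ tm < p := by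
  have := abs_le.1 (Real.abs_mul_sign_le hε (p - 1 / 2))
  unfold bayesAbstain
  split_ifs <;> constructor <;> intro h <;> linarith

lemma abstainLoss_bayesAbstain (hε : 0 ≤ ε) (htt : t1 ≤ tm) (lo mid hi p : ℝ) :
    abstainLoss ε lo mid hi (bayesAbstain t1 tm ε p) =
      if p < t1 then lo else if tm < p then hi else mid := by
  simp only [abstainLoss, bayesAbstain_lt_neg_iff hε htt, lt_bayesAbstain_iff hε]

lemma measurable_bayesAbstain : Measurable (bayesAbstain t1 tm ε) :=
  Measurable.ite (measurableSet_lt measurable_const measurable_id) measurable_const <|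
    Measurable.ite (measurableSet_le measurable_const measurable_id)
      (measurable_const.mul (Real.measurable_sign.comp (measurable_id.sub measurable_const)))
      measurable_const

lemma abstainLoss_bayesAbstain_le {κ A B : ℝ} (hε : 0 ≤ ε) (htt : t1 ≤ tm)
    (hA : A * t1 = κ) (hB : B * (1 - tm) = κ) (hA0 : 0 ≤ A) (hB0 : 0 ≤ B) (p v : ℝ) :
    abstainLoss ε (A * p) κ (B * (1 - p)) (bayesAbstain t1 tm ε p) ≤
      abstainLoss ε (A * p) κ (B * (1 - p)) v := by
  refine le_trans ?_ (min_le_abstainLoss ε _ _ _ v)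
  rw [abstainLoss_bayesAbstain hε htt]
  split_ifs <;> refine le_min ?_ (le_min ?_ ?_) <;> nlinarith

theorem bayesAbstain_risk_le {𝒳 : Type*} [MeasurableSpace 𝒳] {μ : Measure 𝒳}
    [IsFiniteMeasure μ] {η g : 𝒳 → ℝ} (hη : Measurable η) (hint : Integrable η μ)
    (hg : Measurable g) {κ : ℝ} (hε : 0 ≤ ε) (ht1 : 0 < t1) (htm : tm < 1) (htt : t1 ≤ tm)
    (hκ1 : t1 ≤ κ) (hκm : 1 - tm ≤ κ)
    (hfeas1 : ∫ x in {x | g x < -ε}, η x ∂μ ≤ ∫ x in {x | η x < t1}, η x ∂μ)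
    (hfeasm : ∫ x in {x | ε < g x}, (1 - η x) ∂μ ≤ ∫ x in {x | tm < η x}, (1 - η x) ∂μ) :
    ∫ x in {x | bayesAbstain t1 tm ε (η x) < -ε}, η x ∂μ
        + ∫ x in {x | ε < bayesAbstain t1 tm ε (η x)}, (1 - η x) ∂μ
        + κ * μ.real {x | |bayesAbstain t1 tm ε (η x)| ≤ ε} ≤
      ∫ x in {x | g x < -ε}, η x ∂μ + ∫ x in {x | ε < g x}, (1 - η x) ∂μ
        + κ * μ.real {x | |g x| ≤ ε} := by
  set A := κ / t1
  set B := κ / (1 - tm)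
  have htm' : 0 < 1 - tm := sub_pos.2 htm
  have hA1 : 1 ≤ A := (one_le_div₀ ht1).2 hκ1
  have hB1 : 1 ≤ B := (one_le_div₀ htm').2 hκm
  have hlo : Integrable (fun x => A * η x) μ := hint.const_mul A
  have hhi : Integrable (fun x => B * (1 - η x)) μ := ((integrable_const 1).sub hint).const_mul B
  have hfstar : Measurable fun x => bayesAbstain t1 tm ε (η x) := measurable_bayesAbstain.comp hη
  have hlag := integral_mono (integrable_abstainLoss hε κ hlo hhi hfstar)
    (integrable_abstainLoss hε κ hlo hhi hg) fun x =>
      abstainLoss_bayesAbstain_le hε htt (div_mul_cancel₀ κ ht1.ne')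
        (div_mul_cancel₀ κ htm'.ne') (by linarith) (by linarith) (η x) (g x)
  rw [integral_abstainLoss hε κ hlo hhi hfstar, integral_abstainLoss hε κ hlo hhi hg,
    integral_const_mul, integral_const_mul, integral_const_mul, integral_const_mul] at hlag
  simp only [bayesAbstain_lt_neg_iff hε htt, lt_bayesAbstain_iff hε] at hlag ⊢
  nlinarith [mul_le_mul_of_nonneg_left hfeas1 (sub_nonneg.2 hA1),
    mul_le_mul_of_nonneg_left hfeasm (sub_nonneg.2 hB1)]

end BayesAbstain

lemma measureReal_inter_le_of_cond_le {Ω : Type*} [MeasurableSpace Ω] {μ : Measure Ω}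
    [IsFiniteMeasure μ] {s t u : Set Ω} (hs : MeasurableSet s) (hs0 : μ s ≠ 0)
    (h : μ[t | s] ≤ μ[u | s]) : μ.real (s ∩ t) ≤ μ.real (s ∩ u) := by
  rw [cond_apply hs, cond_apply hs] at h
  exact ENNReal.toReal_mono (measure_ne_top _ _) ((ENNReal.mul_le_mul_iff_right
    (ENNReal.inv_ne_zero.2 (measure_ne_top _ _)) (ENNReal.inv_ne_top.2 hs0)).1 h)

def IsRegressionFunction {𝒳 Ω : Type*} [MeasurableSpace 𝒳] [MeasurableSpace Ω]
    (P : Measure Ω) (X : Ω → 𝒳) (Y : Ω → ℝ) (η : 𝒳 → ℝ) : Prop :=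
  ∀ A : Set 𝒳, MeasurableSet A →
    P {ω | X ω ∈ A ∧ Y ω = 1} = ∫⁻ x in A, ENNReal.ofReal (η x) ∂(P.map X)

lemma label_one_inter_mul_lt_neg {𝒳 Ω : Type*} {X : Ω → 𝒳} {Y : Ω → ℝ} (g : 𝒳 → ℝ) (ε : ℝ) :
    {ω | Y ω = 1} ∩ {ω | Y ω * g (X ω) < -ε} = {ω | Y ω = 1} ∩ X ⁻¹' {x | g x < -ε} := by
  ext ω
  simp only [Set.mem_inter_iff, Set.mem_ofPred_eq, Set.mem_preimage]
  constructor <;> rintro ⟨h, h'⟩ <;> simp_all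

lemma label_neg_one_inter_mul_lt_neg {𝒳 Ω : Type*} {X : Ω → 𝒳} {Y : Ω → ℝ} (g : 𝒳 → ℝ)
    (ε : ℝ) :
    {ω | Y ω = -1} ∩ {ω | Y ω * g (X ω) < -ε} = {ω | Y ω = -1} ∩ X ⁻¹' {x | ε < g x} := by
  ext ω
  simp only [Set.mem_inter_iff, Set.mem_ofPred_eq, Set.mem_preimage]
  constructor <;> rintro ⟨h, h'⟩ <;> simp_all

section Labels

variable {𝒳 Ω : Type*} [MeasurableSpace 𝒳] [MeasurableSpace Ω] {P : Measure Ω}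
  {X : Ω → 𝒳} {Y : Ω → ℝ} {η : 𝒳 → ℝ}

lemma measureReal_eq_label_add [IsFiniteMeasure P] (hY : Measurable Y)
    (hYval : ∀ ω, Y ω = 1 ∨ Y ω = -1) (S : Set Ω) :
    P.real S = P.real ({ω | Y ω = 1} ∩ S) + P.real ({ω | Y ω = -1} ∩ S) := by
  have hdiff : S \ {ω | Y ω = 1} = {ω | Y ω = -1} ∩ S := by
    ext ω
    rcases hYval ω with h | h <;> norm_num [h, and_comm]
  rw [← measureReal_inter_add_sdiff (s := S) (t := {ω | Y ω = 1})
    (hY (measurableSet_singleton 1)), hdiff, Set.inter_comm]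

namespace IsRegressionFunction

lemma measureReal_one_inter_preimage (hreg : IsRegressionFunction P X Y η)
    (hη0 : ∀ x, 0 ≤ η x) (hint : Integrable η (P.map X)) {A : Set 𝒳} (hA : MeasurableSet A) :
    P.real ({ω | Y ω = 1} ∩ X ⁻¹' A) = ∫ x in A, η x ∂(P.map X) := by
  rw [Set.inter_comm, measureReal_def]
  change (P {ω | X ω ∈ A ∧ Y ω = 1}).toReal = _
  rw [hreg A hA, ← ofReal_integral_eq_lintegral_ofReal hint.integrableOn (ae_of_all _ hη0),
    ENNReal.toReal_ofReal (setIntegral_nonneg hA fun x _ => hη0 x)]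

lemma measureReal_neg_one_inter_preimage [IsFiniteMeasure P] (hreg : IsRegressionFunction P X Y η)
    (hX : Measurable X) (hY : Measurable Y) (hYval : ∀ ω, Y ω = 1 ∨ Y ω = -1)
    (hη0 : ∀ x, 0 ≤ η x) (hint : Integrable η (P.map X)) {A : Set 𝒳} (hA : MeasurableSet A) :
    P.real ({ω | Y ω = -1} ∩ X ⁻¹' A) = ∫ x in A, (1 - η x) ∂(P.map X) := by
  have hsplit := measureReal_eq_label_add hY hYval (P := P) (X ⁻¹' A)
  rw [hreg.measureReal_one_inter_preimage hη0 hint hA, ← map_measureReal_apply hX hA] at hsplit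
  rw [integral_sub (integrable_const 1).integrableOn hint.integrableOn, setIntegral_const,
    smul_eq_mul, mul_one]
  linarith

lemma measureReal_mul_lt_neg [IsFiniteMeasure P] (hreg : IsRegressionFunction P X Y η)
    (hX : Measurable X) (hY : Measurable Y) (hYval : ∀ ω, Y ω = 1 ∨ Y ω = -1)
    (hη0 : ∀ x, 0 ≤ η x) (hint : Integrable η (P.map X)) {g : 𝒳 → ℝ} (hg : Measurable g)
    (ε : ℝ) :
    P.real {ω | Y ω * g (X ω) < -ε} =
      ∫ x in {x | g x < -ε}, η x ∂(P.map X) + ∫ x in {x | ε < g x}, (1 - η x) ∂(P.map X) := by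
  rw [measureReal_eq_label_add hY hYval, label_one_inter_mul_lt_neg,
    label_neg_one_inter_mul_lt_neg,
    hreg.measureReal_one_inter_preimage hη0 hint (measurableSet_lt hg measurable_const),
    hreg.measureReal_neg_one_inter_preimage hX hY hYval hη0 hint
      (measurableSet_lt measurable_const hg)]

lemma setIntegral_lt_neg_le_of_cond_le [IsFiniteMeasure P] (hreg : IsRegressionFunction P X Y η)
    (hY : Measurable Y) (hη0 : ∀ x, 0 ≤ η x) (hint : Integrable η (P.map X))
    (hpos : P {ω | Y ω = 1} ≠ 0) {g : 𝒳 → ℝ} (hg : Measurable g) {ε : ℝ} {A : Set 𝒳}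
    (hA : MeasurableSet A)
    (h : P[{ω | Y ω * g (X ω) < -ε} | {ω | Y ω = 1}] ≤ P[X ⁻¹' A | {ω | Y ω = 1}]) :
    ∫ x in {x | g x < -ε}, η x ∂(P.map X) ≤ ∫ x in A, η x ∂(P.map X) := by
  have := measureReal_inter_le_of_cond_le (s := {ω | Y ω = 1})
    (hY (measurableSet_singleton 1)) hpos h
  rwa [label_one_inter_mul_lt_neg,
    hreg.measureReal_one_inter_preimage hη0 hint (measurableSet_lt hg measurable_const),
    hreg.measureReal_one_inter_preimage hη0 hint hA] at this

lemma setIntegral_lt_le_of_cond_le [IsFiniteMeasure P] (hreg : IsRegressionFunction P X Y η)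
    (hX : Measurable X) (hY : Measurable Y) (hYval : ∀ ω, Y ω = 1 ∨ Y ω = -1)
    (hη0 : ∀ x, 0 ≤ η x) (hint : Integrable η (P.map X))
    (hpos : P {ω | Y ω = -1} ≠ 0) {g : 𝒳 → ℝ} (hg : Measurable g) {ε : ℝ} {A : Set 𝒳}
    (hA : MeasurableSet A)
    (h : P[{ω | Y ω * g (X ω) < -ε} | {ω | Y ω = -1}] ≤ P[X ⁻¹' A | {ω | Y ω = -1}]) :
    ∫ x in {x | ε < g x}, (1 - η x) ∂(P.map X) ≤ ∫ x in A, (1 - η x) ∂(P.map X) := by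
  have := measureReal_inter_le_of_cond_le (s := {ω | Y ω = -1})
    (hY (measurableSet_singleton (-1))) hpos h
  rwa [label_neg_one_inter_mul_lt_neg,
    hreg.measureReal_neg_one_inter_preimage hX hY hYval hη0 hint
      (measurableSet_lt measurable_const hg),
    hreg.measureReal_neg_one_inter_preimage hX hY hYval hη0 hint hA] at this

end IsRegressionFunction

end Labels

theorem excess_ambiguity_le_excess_Rbar_general
    {𝒳 : Type*} [MeasurableSpace 𝒳]
    {Ω : Type*} [MeasurableSpace Ω] (P : Measure Ω) [IsProbabilityMeasure P]
    (X : Ω → 𝒳) (Y : Ω → ℝ) (hX : Measurable X) (hY : Measurable Y)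
    (hYval : ∀ ω, Y ω = 1 ∨ Y ω = -1)
    (hpos1 : 0 < P {ω | Y ω = 1}) (hposm : 0 < P {ω | Y ω = -1})
    -- η is a measurable version of the regression function x ↦ P(Y = 1 ∣ X = x)
    (η : 𝒳 → ℝ) (hη : Measurable η) (hη01 : ∀ x, η x ∈ Set.Icc (0 : ℝ) 1)
    (hreg : ∀ A : Set 𝒳, MeasurableSet A →
      P {ω | X ω ∈ A ∧ Y ω = 1} = ∫⁻ x in A, ENNReal.ofReal (η x) ∂(P.map X))
    -- noncoverage levels and thresholds
    (αm α1 : ℝ) (hαm : αm ∈ Set.Ioo (0 : ℝ) 1) (hα1 : α1 ∈ Set.Ioo (0 : ℝ) 1)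
    (tm t1 : ℝ)
    (htm : P[|{ω | Y ω = -1}] {ω | tm < η (X ω)} = ENNReal.ofReal αm)
    (ht1 : P[|{ω | Y ω = 1}] {ω | η (X ω) < t1} = ENNReal.ofReal α1)
    -- Assumption 2
    (c : ℝ) (hc : 0 < c) (hctm : c ≤ tm - 1 / 2) (hct1 : c ≤ 1 / 2 - t1)
    (ε : ℝ) (hε : 0 ≤ ε)
    -- the Bayes-type rule f*
    (fstar : 𝒳 → ℝ)
    (hfstar : ∀ x, fstar x =
      if tm < η x then 1 + ε
      else if t1 ≤ η x then ε * Real.sign (η x - 1 / 2)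
      else -(1 + ε))
    -- an arbitrary measurable feasible competitor f
    (f : 𝒳 → ℝ) (hf : Measurable f)
    (hfeasm : P[|{ω | Y ω = -1}] {ω | Y ω * f (X ω) < -ε} ≤ ENNReal.ofReal αm)
    (hfeas1 : P[|{ω | Y ω = 1}] {ω | Y ω * f (X ω) < -ε} ≤ ENNReal.ofReal α1) :
    (P {ω | |f (X ω)| ≤ ε}).toReal - (P {ω | |fstar (X ω)| ≤ ε}).toReal
    ≤ (1 / c) *
      (((P {ω | Y ω * f (X ω) < -ε}).toReal
          + (1 / 2) * (P {ω | |f (X ω)| ≤ ε}).toReal)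
        - ((P {ω | Y ω * fstar (X ω) < -ε}).toReal
          + (1 / 2) * (P {ω | |fstar (X ω)| ≤ ε}).toReal)) := by
  obtain rfl : fstar = fun x => bayesAbstain t1 tm ε (η x) := funext hfstar
  have hreg : IsRegressionFunction P X Y η := hreg
  have hη0 x : 0 ≤ η x := (hη01 x).1
  have hint : Integrable η (P.map X) := .of_bound hη.aestronglyMeasurable 1
    (ae_of_all _ fun x => abs_le.2 ⟨by linarith [hη0 x], (hη01 x).2⟩)
  obtain ⟨ω₁, hω₁ : η (X ω₁) < t1⟩ : {ω | η (X ω) < t1}.Nonempty :=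
    nonempty_of_measure_ne_zero (ht1 ▸ (ENNReal.ofReal_pos.2 hα1.1).ne')
  obtain ⟨ωₘ, hωₘ : tm < η (X ωₘ)⟩ : {ω | tm < η (X ω)}.Nonempty :=
    nonempty_of_measure_ne_zero (htm ▸ (ENNReal.ofReal_pos.2 hαm.1).ne')
  have key := bayesAbstain_risk_le (κ := 1 / 2 - c) hη hint hf hε
    (by linarith [hη0 (X ω₁)]) (by linarith [(hη01 (X ωₘ)).2]) (by linarith) (by linarith)
    (by linarith)
    (hreg.setIntegral_lt_neg_le_of_cond_le hY hη0 hint hpos1.ne' hf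
      (measurableSet_lt hη measurable_const) (hfeas1.trans ht1.symm.le))
    (hreg.setIntegral_lt_le_of_cond_le hX hY hYval hη0 hint hposm.ne' hf
      (measurableSet_lt measurable_const hη) (hfeasm.trans htm.symm.le))
  have hamb {g : 𝒳 → ℝ} (hg : Measurable g) :
      P.real {ω | |g (X ω)| ≤ ε} = (P.map X).real {x | |g x| ≤ ε} :=
    (map_measureReal_apply hX (measurableSet_le hg.abs measurable_const)).symm
  have hfstar_meas : Measurable fun x => bayesAbstain t1 tm ε (η x) :=
    measurable_bayesAbstain.comp hη
  beta_reduce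
  simp only [← measureReal_def]
  rw [hreg.measureReal_mul_lt_neg hX hY hYval hη0 hint hf,
    hreg.measureReal_mul_lt_neg hX hY hYval hη0 hint hfstar_meas, hamb hf, hamb hfstar_meas,
    one_div_mul_eq_div, le_div_iff₀ hc]
  linarith

/-- Under Assumptions 1 and 2, for every measurable feasible `f̂`, the excess ambiguity is controlled by the excess `R̄`-risk: `R(f̂, ε) − R(f*, ε) ≤ (1/c)·(R̄(f̂, ε) − R̄(f*, ε))`. -/
theorem excess_ambiguity_le_excess_Rbar
    {𝒳 : Type*} [MeasurableSpace 𝒳]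
    {Ω : Type*} [MeasurableSpace Ω] (P : Measure Ω) [IsProbabilityMeasure P]
    (X : Ω → 𝒳) (Y : Ω → ℝ) (hX : Measurable X) (hY : Measurable Y)
    (hYval : ∀ ω, Y ω = 1 ∨ Y ω = -1)
    (hpos1 : 0 < P {ω | Y ω = 1}) (hposm : 0 < P {ω | Y ω = -1})
    -- η is a measurable version of the regression function x ↦ P(Y = 1 ∣ X = x)
    (η : 𝒳 → ℝ) (hη : Measurable η) (hη01 : ∀ x, η x ∈ Set.Icc (0 : ℝ) 1)
    (hreg : ∀ A : Set 𝒳, MeasurableSet A →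
      P {ω | X ω ∈ A ∧ Y ω = 1} = ∫⁻ x in A, ENNReal.ofReal (η x) ∂(P.map X))
    -- noncoverage levels and thresholds
    (αm α1 : ℝ) (hαm : αm ∈ Set.Ioo (0 : ℝ) 1) (hα1 : α1 ∈ Set.Ioo (0 : ℝ) 1)
    (tm t1 : ℝ)
    (htm : P[|{ω | Y ω = -1}] {ω | tm < η (X ω)} = ENNReal.ofReal αm)
    (ht1 : P[|{ω | Y ω = 1}] {ω | η (X ω) < t1} = ENNReal.ofReal α1)
    -- Assumption 1: the distribution of η(X) is atomless under both class-conditional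
    -- distributions, and t1 ≤ 1/2 ≤ tm
    (hatomlessm : ∀ t : ℝ, P[|{ω | Y ω = -1}] {ω | η (X ω) = t} = 0)
    (hatomless1 : ∀ t : ℝ, P[|{ω | Y ω = 1}] {ω | η (X ω) = t} = 0)
    (ht1half : t1 ≤ 1 / 2) (hhalftm : 1 / 2 ≤ tm)
    -- Assumption 2
    (c : ℝ) (hc : 0 < c) (hctm : c ≤ tm - 1 / 2) (hct1 : c ≤ 1 / 2 - t1)
    (ε : ℝ) (hε : 0 ≤ ε)
    -- the Bayes-type rule f*
    (fstar : 𝒳 → ℝ)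
    (hfstar : ∀ x, fstar x =
      if tm < η x then 1 + ε
      else if t1 ≤ η x then ε * Real.sign (η x - 1 / 2)
      else -(1 + ε))
    -- an arbitrary measurable feasible competitor f
    (f : 𝒳 → ℝ) (hf : Measurable f)
    (hfeasm : P[|{ω | Y ω = -1}] {ω | Y ω * f (X ω) < -ε} ≤ ENNReal.ofReal αm)
    (hfeas1 : P[|{ω | Y ω = 1}] {ω | Y ω * f (X ω) < -ε} ≤ ENNReal.ofReal α1) :
    (P {ω | |f (X ω)| ≤ ε}).toReal - (P {ω | |fstar (X ω)| ≤ ε}).toReal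
    ≤ (1 / c) *
      (((P {ω | Y ω * f (X ω) < -ε}).toReal
          + (1 / 2) * (P {ω | |f (X ω)| ≤ ε}).toReal)
        - ((P {ω | Y ω * fstar (X ω) < -ε}).toReal
          + (1 / 2) * (P {ω | |fstar (X ω)| ≤ ε}).toReal)) :=
  excess_ambiguity_le_excess_Rbar_general P X Y hX hY hYval hpos1 hposm η hη hη01 hreg αm α1 hαm hα1
    tm t1 htm ht1 c hc hctm hct1 ε hε fstar hfstar f hf hfeasm hfeas1
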